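/- Let (Σ ⊂ ℝ^n, μ) be a compact measure space admitting a t-design curve α, reparameterized with constant speed. Then the curve γ: [0,1] → Σ × S^1 ⊂ ℝ^{n+2} defined by γ(s) = (α((t+1)s - ⌊(t+1)s⌋), cos 2πs, sin 2πs) is a t-design curve on (Σ × S^1, μ × σ), where σ is the arc-length measure on S^1: the normalized line integral of γ applied to any polynomial on ℝ^{n+2} of degree at most t equals its μ × σ-average over Σ × S^1. -/

import Mathlib

open Real MvPolynomial MeasureTheory

/-- The product curve `γ(s) = (α((t+1)s - ⌊(t+1)s⌋), cos 2πs, sin 2πs)` in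
`ℝ^n × ℝ² = ℝ^{n+2}`. -/
noncomputable def productCurve (n t : ℕ) (α : ℝ → EuclideanSpace ℝ (Fin n)) (s : ℝ) :
    EuclideanSpace ℝ (Fin n ⊕ Fin 2) :=
  (WithLp.equiv 2 (Fin n ⊕ Fin 2 → ℝ)).symm
    (Sum.elim (WithLp.equiv 2 (Fin n → ℝ) (α (Int.fract ((t + 1 : ℝ) * s))))
      ![Real.cos (2 * π * s), Real.sin (2 * π * s)])

/-!
Cut `[0, 1]` into the `t + 1` arcs `[k/(t+1), (k+1)/(t+1)]`. On each arc `γ` runs once through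
`α` while its circle component advances by `2π/(t+1)`, so after substituting `s = (u+k)/(t+1)`
the line integral of `f` along `γ` becomes `∫₀¹` of the average of `f (α u, cos θ, sin θ)` over
`t + 1` equally spaced angles `θ`. Such an equally spaced rule integrates every trigonometric
polynomial of degree `≤ t` exactly (the nonconstant exponentials sum to zero over roots of
unity), so the average is the circle mean of `f (x, ·)`, a polynomial of degree `≤ t` in `x`,
evaluated at `α u`. The design property of `α` turns its integral into the `μ`-average over `K`.
Both curves have constant speed (away from the seams of `γ`, a null set), so the arc-length
weights cancel.
-/

open Finset Filter Topology Interval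

noncomputable section

open Complex in
def fourierExp (m : ℤ) (θ : ℝ) : ℂ := exp (m * θ * I)

def trigPolyDegreeLE (N : ℕ) : Submodule ℂ (ℝ → ℂ) :=
  Submodule.span ℂ (fourierExp '' {m | m.natAbs ≤ N})

lemma fourierExp_mul (m m' : ℤ) : fourierExp m * fourierExp m' = fourierExp (m + m') := by
  ext θ
  simp only [fourierExp, Pi.mul_apply, ← Complex.exp_add]
  push_cast
  ring_nf

lemma fourierExp_mem_trigPolyDegreeLE {m : ℤ} {N : ℕ} (hm : m.natAbs ≤ N) :
    fourierExp m ∈ trigPolyDegreeLE N :=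
  Submodule.subset_span ⟨m, hm, rfl⟩

lemma trigPolyDegreeLE_mono : Monotone trigPolyDegreeLE := fun _ _ h =>
  Submodule.span_mono (Set.image_mono fun _ hm => le_trans hm h)

lemma trigPolyDegreeLE_mul_le (p q : ℕ) :
    trigPolyDegreeLE p * trigPolyDegreeLE q ≤ trigPolyDegreeLE (p + q) := by
  rw [trigPolyDegreeLE, trigPolyDegreeLE, Submodule.span_mul_span]
  refine Submodule.span_le.2 (Set.mul_subset_iff.2 ?_)
  rintro _ ⟨m, hm, rfl⟩ _ ⟨m', hm', rfl⟩
  rw [fourierExp_mul]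
  exact fourierExp_mem_trigPolyDegreeLE (by simp only [Set.mem_ofPred_eq] at hm hm'; omega)

lemma trigPolyDegreeLE_pow_le (p a : ℕ) :
    trigPolyDegreeLE p ^ a ≤ trigPolyDegreeLE (a * p) := by
  induction a with
  | zero =>
    rw [pow_zero, Submodule.one_eq_span, Submodule.span_le, Set.singleton_subset_iff]
    have : (1 : ℝ → ℂ) = fourierExp 0 := by ext; simp [fourierExp]
    exact this ▸ fourierExp_mem_trigPolyDegreeLE (Nat.zero_le _)
  | succ a ih =>
    rw [pow_succ, add_one_mul]
    exact (mul_le_mul_left ih _).trans (trigPolyDegreeLE_mul_le _ _)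

lemma cos_mem_trigPolyDegreeLE_one :
    (fun θ : ℝ => (Real.cos θ : ℂ)) ∈ trigPolyDegreeLE 1 := by
  have : (fun θ : ℝ => (Real.cos θ : ℂ)) = (2 : ℂ)⁻¹ • (fourierExp 1 + fourierExp (-1)) := by
    ext θ
    simp only [fourierExp, Complex.ofReal_cos, Complex.cos, Pi.smul_apply, Pi.add_apply,
      smul_eq_mul]
    push_cast
    ring_nf
  rw [this]
  exact Submodule.smul_mem _ _ (Submodule.add_mem _ (fourierExp_mem_trigPolyDegreeLE le_rfl)
    (fourierExp_mem_trigPolyDegreeLE le_rfl))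

lemma sin_mem_trigPolyDegreeLE_one :
    (fun θ : ℝ => (Real.sin θ : ℂ)) ∈ trigPolyDegreeLE 1 := by
  have : (fun θ : ℝ => (Real.sin θ : ℂ)) =
      (2 * Complex.I)⁻¹ • (fourierExp 1 - fourierExp (-1)) := by
    ext θ
    simp only [fourierExp, Complex.ofReal_sin, Complex.sin, Pi.smul_apply, Pi.sub_apply,
      smul_eq_mul]
    push_cast
    field_simp
    ring_nf
    rw [Complex.I_sq]
    ring
  rw [this]
  exact Submodule.smul_mem _ _ (Submodule.sub_mem _ (fourierExp_mem_trigPolyDegreeLE le_rfl)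
    (fourierExp_mem_trigPolyDegreeLE le_rfl))

lemma cos_pow_mul_sin_pow_mem_trigPolyDegreeLE (a b : ℕ) :
    (fun θ : ℝ => (Real.cos θ : ℂ) ^ a * (Real.sin θ : ℂ) ^ b) ∈ trigPolyDegreeLE (a + b) := by
  have hcos := trigPolyDegreeLE_pow_le 1 a
    (Submodule.pow_mem_pow _ cos_mem_trigPolyDegreeLE_one a)
  have hsin := trigPolyDegreeLE_pow_le 1 b
    (Submodule.pow_mem_pow _ sin_mem_trigPolyDegreeLE_one b)
  rw [mul_one] at hcos hsin
  exact trigPolyDegreeLE_mul_le a b (Submodule.mul_mem_mul hcos hsin)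

open Complex in
lemma circleMean_fourierExp (m : ℤ) :
    (2 * π : ℂ)⁻¹ * ∫ θ in (0 : ℝ)..2 * π, fourierExp m θ = if m = 0 then 1 else 0 := by
  have hπ : (2 * π : ℂ) ≠ 0 := by exact_mod_cast two_pi_pos.ne'
  split_ifs with hm
  · simp only [fourierExp, hm, Int.cast_zero, zero_mul, Complex.exp_zero,
      intervalIntegral.integral_const, sub_zero, Complex.real_smul, mul_one]
    push_cast
    exact inv_mul_cancel₀ hπ
  · have hmI : (m * I : ℂ) ≠ 0 := by simp [hm, I_ne_zero]
    have hper : exp (m * I * (2 * π : ℝ)) = 1 := by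
      rw [← exp_int_mul_two_pi_mul_I m]; push_cast; ring_nf
    simp only [fourierExp, mul_right_comm _ _ I, integral_exp_mul_complex hmI, hper]
    simp

open Complex in
lemma sum_fourierExp_equispaced_eq_zero {m : ℤ} {N : ℕ} (hm0 : m ≠ 0) (hm : m.natAbs ≤ N)
    (u : ℝ) : ∑ k ∈ range (N + 1), fourierExp m (2 * π * ((u + k) / (N + 1))) = 0 := by
  have hζ := isPrimitiveRoot_exp (N + 1) N.succ_ne_zero
  set z := exp (2 * π * I / (N + 1 : ℕ)) ^ m with hz
  have hz1 : z ≠ 1 := by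
    rw [hz, Ne, hζ.zpow_eq_one_iff_dvd]
    intro hdvd
    exact hm0 (Int.eq_zero_of_dvd_of_natAbs_lt_natAbs hdvd (by push_cast; omega))
  have hzN : z ^ (N + 1) = 1 := by
    rw [hz, ← zpow_natCast, ← zpow_mul, mul_comm m, zpow_mul, zpow_natCast, hζ.pow_eq_one,
      one_zpow]
  have hterm : ∀ k ∈ range (N + 1), fourierExp m (2 * π * ((u + k) / (N + 1))) =
      fourierExp m (2 * π * (u / (N + 1))) * z ^ k := by
    intro k _
    rw [hz, ← zpow_natCast, ← zpow_mul, ← exp_int_mul, fourierExp, fourierExp,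
      ← Complex.exp_add]
    congr 1
    push_cast
    field_simp
  rw [sum_congr rfl hterm, ← mul_sum, geom_sum_eq hz1, hzN]
  simp

lemma equispacedMean_fourierExp {m : ℤ} {N : ℕ} (hm : m.natAbs ≤ N) (u : ℝ) :
    ((N : ℂ) + 1)⁻¹ * ∑ k ∈ range (N + 1), fourierExp m (2 * π * ((u + k) / (N + 1))) =
      if m = 0 then 1 else 0 := by
  split_ifs with hm0
  · have : ((N : ℂ) + 1) ≠ 0 := by exact_mod_cast N.succ_ne_zero
    simp [fourierExp, hm0, this]
  · rw [sum_fourierExp_equispaced_eq_zero hm0 hm, mul_zero]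

lemma equispacedMean_eq_circleMean {N : ℕ} {g : ℝ → ℂ} (hg : g ∈ trigPolyDegreeLE N)
    (u : ℝ) :
    ((N : ℂ) + 1)⁻¹ * ∑ k ∈ range (N + 1), g (2 * π * ((u + k) / (N + 1))) =
      (2 * π : ℂ)⁻¹ * ∫ θ in (0 : ℝ)..2 * π, g θ := by
  -- continuity is carried through the induction so that the integral of a sum splits
  suffices Continuous g ∧ ∀ u : ℝ, ((N : ℂ) + 1)⁻¹ * ∑ k ∈ range (N + 1),
      g (2 * π * ((u + k) / (N + 1))) = (2 * π : ℂ)⁻¹ * ∫ θ in (0 : ℝ)..2 * π, g θ from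
    this.2 u
  induction hg using Submodule.span_induction with
  | mem g hg =>
    obtain ⟨m, hm, rfl⟩ := hg
    refine ⟨by unfold fourierExp; fun_prop, fun u => ?_⟩
    rw [equispacedMean_fourierExp hm, circleMean_fourierExp]
  | zero => exact ⟨continuous_const, fun u => by simp⟩
  | add g h _ _ hg hh =>
    refine ⟨hg.1.add hh.1, fun u => ?_⟩
    simp only [Pi.add_apply, sum_add_distrib, mul_add, hg.2 u, hh.2 u]
    rw [intervalIntegral.integral_add (hg.1.intervalIntegrable _ _)
      (hh.1.intervalIntegrable _ _), mul_add]
  | smul c g _ hg =>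
    refine ⟨hg.1.const_smul c, fun u => ?_⟩
    simp only [Pi.smul_apply, smul_eq_mul, ← mul_sum, intervalIntegral.integral_const_mul]
    rw [mul_left_comm, hg.2 u, mul_left_comm]

def circleMoment (a b : ℕ) : ℝ :=
  (2 * π)⁻¹ * ∫ θ in (0 : ℝ)..2 * π, cos θ ^ a * sin θ ^ b

lemma equispacedMean_cos_pow_mul_sin_pow {N a b : ℕ} (hab : a + b ≤ N) (u : ℝ) :
    ((N : ℝ) + 1)⁻¹ * ∑ k ∈ range (N + 1),
      cos (2 * π * ((u + k) / (N + 1))) ^ a * sin (2 * π * ((u + k) / (N + 1))) ^ b =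
        circleMoment a b := by
  apply Complex.ofReal_injective
  have := equispacedMean_eq_circleMean
    (trigPolyDegreeLE_mono hab (cos_pow_mul_sin_pow_mem_trigPolyDegreeLE a b)) u
  push_cast [circleMoment, ← intervalIntegral.integral_ofReal] at this ⊢
  exact this

section

variable {σ : Type*}

def circleVarsAverage (f : MvPolynomial (σ ⊕ Fin 2) ℝ) : MvPolynomial σ ℝ :=
  ∑ d ∈ f.support, monomial (d.comapDomain Sum.inl Sum.inl_injective.injOn)
    (coeff d f * circleMoment (d (Sum.inr 0)) (d (Sum.inr 1)))

lemma sum_comapDomain_inl_add [Fintype σ] (d : (σ ⊕ Fin 2) →₀ ℕ) :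
    ((d.comapDomain Sum.inl Sum.inl_injective.injOn).sum fun _ e => e) +
      (d (Sum.inr 0) + d (Sum.inr 1)) = d.sum fun _ e => e := by
  rw [Finsupp.sum_fintype _ _ fun _ => rfl, Finsupp.sum_fintype _ _ fun _ => rfl,
    Fintype.sum_sum_type, Fin.sum_univ_two]
  rfl

lemma totalDegree_circleVarsAverage_le [Fintype σ] {f : MvPolynomial (σ ⊕ Fin 2) ℝ} {N : ℕ}
    (hf : f.totalDegree ≤ N) : (circleVarsAverage f).totalDegree ≤ N := by
  refine (totalDegree_finsetSum _ _).trans (Finset.sup_le fun d hd => ?_)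
  refine (totalDegree_monomial_le _ _).trans ?_
  have := sum_comapDomain_inl_add d ▸ le_totalDegree hd
  exact le_trans (Nat.le_add_right _ _) (this.trans hf)

lemma eval_sumElim [Fintype σ] (f : MvPolynomial (σ ⊕ Fin 2) ℝ) (x : σ → ℝ) (c s : ℝ) :
    eval (Sum.elim x ![c, s]) f = ∑ d ∈ f.support,
      coeff d f * ((∏ i, x i ^ d (Sum.inl i)) * (c ^ d (Sum.inr 0) * s ^ d (Sum.inr 1))) := by
  simp only [eval_eq', Fintype.prod_sum_type, Fin.prod_univ_two, Sum.elim_inl, Sum.elim_inr,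
    Matrix.cons_val_zero, Matrix.cons_val_one]

lemma eval_circleVarsAverage [Fintype σ] (f : MvPolynomial (σ ⊕ Fin 2) ℝ) (x : σ → ℝ) :
    eval x (circleVarsAverage f) = ∑ d ∈ f.support,
      coeff d f * ((∏ i, x i ^ d (Sum.inl i)) * circleMoment (d (Sum.inr 0)) (d (Sum.inr 1))) := by
  simp only [circleVarsAverage, map_sum, eval_monomial, Finsupp.prod_pow,
    Finsupp.comapDomain_apply]
  exact sum_congr rfl fun d _ => by ring

lemma eval_circleVarsAverage_eq_circleMean [Fintype σ] (f : MvPolynomial (σ ⊕ Fin 2) ℝ)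
    (x : σ → ℝ) : eval x (circleVarsAverage f) =
      (2 * π)⁻¹ * ∫ θ in (0 : ℝ)..2 * π, eval (Sum.elim x ![cos θ, sin θ]) f := by
  simp only [eval_sumElim, eval_circleVarsAverage, circleMoment]
  rw [intervalIntegral.integral_finsetSum fun d _ =>
    Continuous.intervalIntegrable (by fun_prop) _ _]
  simp only [intervalIntegral.integral_const_mul, mul_sum]
  exact sum_congr rfl fun d _ => by ring

lemma eval_circleVarsAverage_eq_equispacedMean [Fintype σ] {f : MvPolynomial (σ ⊕ Fin 2) ℝ}
    {N : ℕ} (hf : f.totalDegree ≤ N) (x : σ → ℝ) (u : ℝ) :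
    eval x (circleVarsAverage f) = ((N : ℝ) + 1)⁻¹ * ∑ k ∈ range (N + 1),
      eval (Sum.elim x
        ![cos (2 * π * ((u + k) / (N + 1))), sin (2 * π * ((u + k) / (N + 1)))]) f := by
  simp only [eval_sumElim, eval_circleVarsAverage]
  rw [sum_comm, mul_sum]
  refine sum_congr rfl fun d hd => ?_
  have hdeg : d (Sum.inr 0) + d (Sum.inr 1) ≤ N :=
    le_trans (Nat.le_add_left _ _) ((sum_comapDomain_inl_add d ▸ le_totalDegree hd).trans hf)
  rw [← equispacedMean_cos_pow_mul_sin_pow hdeg u]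
  simp only [mul_sum]
  exact sum_congr rfl fun k _ => by ring

end

lemma hasDerivAt_fract {x : ℝ} (hx : Int.fract x ≠ 0) : HasDerivAt Int.fract 1 x := by
  have hlt : (⌊x⌋ : ℝ) < x := by
    have := (Int.fract_nonneg x).lt_of_ne' hx
    rwa [← Int.self_sub_floor, sub_pos] at this
  have : Int.fract =ᶠ[𝓝 x] fun y => y - ⌊x⌋ := by
    filter_upwards [Ioo_mem_nhds hlt (Int.lt_floor_add_one x)] with y hy
    rw [← Int.self_sub_floor, Int.floor_eq_on_Ico ⌊x⌋ y ⟨hy.1.le, hy.2⟩]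
  exact ((hasDerivAt_id x).sub_const _).congr_of_eventuallyEq this

lemma hasDerivAt_comp_fract_mul {E : Type*} [NormedAddCommGroup E] [NormedSpace ℝ E]
    {α : ℝ → E} {T s : ℝ} (hs : Int.fract (T * s) ≠ 0)
    (hα : DifferentiableAt ℝ α (Int.fract (T * s))) :
    HasDerivAt (fun s => α (Int.fract (T * s))) (T • deriv α (Int.fract (T * s))) s := by
  have := hα.hasDerivAt.scomp s
    ((hasDerivAt_fract hs).comp s ((hasDerivAt_id s).const_mul T))
  simpa [Function.comp_def] using this

lemma apply_fract_eq_of_closed {β : Type*} {α : ℝ → β} (hclosed : α 0 = α 1) {u : ℝ}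
    (hu : u ∈ Set.Icc (0 : ℝ) 1) : α (Int.fract u) = α u := by
  rcases hu.2.lt_or_eq with hu1 | rfl
  · rw [Int.fract_eq_self.2 ⟨hu.1, hu1⟩]
  · rw [Int.fract_one, hclosed]

lemma ae_fract_mul_ne_zero {T : ℝ} (hT : T ≠ 0) : ∀ᵐ s : ℝ, Int.fract (T * s) ≠ 0 := by
  refine measure_mono_null (fun s hs => ?_)
    ((Set.countable_range fun m : ℤ => m / T).measure_zero _)
  refine ⟨⌊T * s⌋, ?_⟩
  have : T * s - ⌊T * s⌋ = 0 := by rw [Int.self_sub_floor]; exact not_not.1 hs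
  field_simp
  linarith

lemma integral_eq_integral_average_translates {E : Type*} [NormedAddCommGroup E]
    [NormedSpace ℝ E] [CompleteSpace E] {H : ℝ → E} (hH : Continuous H) (N : ℕ) :
    ∫ s in (0 : ℝ)..1, H s =
      ∫ u in (0 : ℝ)..1, ((N : ℝ) + 1)⁻¹ • ∑ k ∈ range (N + 1), H ((u + k) / (N + 1)) := by
  have hN : ((N : ℝ) + 1) ≠ 0 := by positivity
  have hpiece : ∀ k : ℕ, ∫ u in (0 : ℝ)..1, H ((u + k) / (N + 1)) =
      ((N : ℝ) + 1) • ∫ s in (k / (N + 1) : ℝ)..((k + 1 : ℕ) / (N + 1)), H s := by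
    intro k
    simp only [add_div, intervalIntegral.integral_comp_div_add (f := H) hN, zero_div, zero_add]
    push_cast
    ring_nf
  rw [intervalIntegral.integral_smul, intervalIntegral.integral_finsetSum]
  swap
  · exact fun k _ => (hH.comp (by fun_prop)).intervalIntegrable _ _
  simp only [hpiece, ← smul_sum, smul_smul, inv_mul_cancel₀ hN, one_smul]
  rw [intervalIntegral.sum_integral_adjacent_intervals fun k _ => hH.intervalIntegrable _ _]
  simp [hN]

lemma lineAverage_eq_integral {E : Type*} [NormedAddCommGroup E] [NormedSpace ℝ E]
    {γ : ℝ → E} {c : ℝ} (hc : c ≠ 0) (hspeed : ∀ᵐ s, s ∈ Ι (0 : ℝ) 1 → ‖deriv γ s‖ = c)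
    (F : ℝ → ℝ) :
    (∫ s in (0 : ℝ)..1, ‖deriv γ s‖)⁻¹ * ∫ s in (0 : ℝ)..1, F s * ‖deriv γ s‖ =
      ∫ s in (0 : ℝ)..1, F s := by
  have hlength : ∫ s in (0 : ℝ)..1, ‖deriv γ s‖ = c := by
    simp [intervalIntegral.integral_congr_ae (g := fun _ => c) hspeed]
  have hweighted : ∫ s in (0 : ℝ)..1, F s * ‖deriv γ s‖ = (∫ s in (0 : ℝ)..1, F s) * c := by
    rw [← intervalIntegral.integral_mul_const]
    exact intervalIntegral.integral_congr_ae (hspeed.mono fun s hs hmem => by rw [hs hmem])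
  rw [hlength, hweighted, mul_comm, mul_assoc, mul_inv_cancel₀ hc, mul_one]

lemma EuclideanSpace.norm_sq_toLp_sumElim {ι κ : Type*} [Fintype ι] [Fintype κ]
    (a : EuclideanSpace ℝ ι) (b : EuclideanSpace ℝ κ) :
    ‖(WithLp.toLp 2 (Sum.elim a.ofLp b.ofLp) : EuclideanSpace ℝ (ι ⊕ κ))‖ ^ 2 =
      ‖a‖ ^ 2 + ‖b‖ ^ 2 := by
  simp only [EuclideanSpace.real_norm_sq_eq, Fintype.sum_sum_type, Sum.elim_inl, Sum.elim_inr]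

lemma hasDerivAt_toLp_sumElim {ι κ : Type*} [Fintype ι] [Fintype κ]
    {x : ℝ → EuclideanSpace ℝ ι} {y : ℝ → EuclideanSpace ℝ κ} {x' : EuclideanSpace ℝ ι}
    {y' : EuclideanSpace ℝ κ} {s : ℝ} (hx : HasDerivAt x x' s) (hy : HasDerivAt y y' s) :
    HasDerivAt (F := EuclideanSpace ℝ (ι ⊕ κ))
      (fun s => WithLp.toLp 2 (Sum.elim (x s).ofLp (y s).ofLp))
      (WithLp.toLp 2 (Sum.elim x'.ofLp y'.ofLp)) s :=
  (EuclideanSpace.sumEquivProd (𝕜 := ℝ)).symm.hasFDerivAt.comp_hasDerivAt s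
    (hx.prodMk hy)

lemma hasDerivAt_toLp_cos_sin (ω s : ℝ) :
    HasDerivAt (F := EuclideanSpace ℝ (Fin 2))
      (fun s => WithLp.toLp 2 ![cos (ω * s), sin (ω * s)])
      (WithLp.toLp 2 ![-(ω * sin (ω * s)), ω * cos (ω * s)]) s := by
  have hcos := ((hasDerivAt_id s).const_mul ω).cos
  have hsin := ((hasDerivAt_id s).const_mul ω).sin
  have h : HasDerivAt (fun s => ![cos (ω * s), sin (ω * s)])
      ![-(ω * sin (ω * s)), ω * cos (ω * s)] s := by
    refine hasDerivAt_pi.2 fun i => ?_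
    fin_cases i
    · simpa [mul_comm] using hcos
    · simpa [mul_comm] using hsin
  exact (PiLp.continuousLinearEquiv 2 ℝ _).symm.hasFDerivAt.comp_hasDerivAt s h

lemma norm_toLp_neg_sin_cos (ω θ : ℝ) :
    ‖(WithLp.toLp 2 ![-(ω * sin θ), ω * cos θ] : EuclideanSpace ℝ (Fin 2))‖ = |ω| := by
  rw [EuclideanSpace.norm_eq, Fin.sum_univ_two, ← sqrt_sq_eq_abs]
  congr 1
  simp only [Real.norm_eq_abs, sq_abs, Matrix.cons_val_zero, Matrix.cons_val_one,
    Matrix.cons_val_fin_one, neg_sq, mul_pow, ← mul_add, sin_sq_add_cos_sq, mul_one]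

lemma continuous_productCurve {n t : ℕ} {α : ℝ → EuclideanSpace ℝ (Fin n)}
    (hcont : ContinuousOn α (Set.Icc 0 1)) (hclosed : α 0 = α 1) :
    Continuous (productCurve n t α) := by
  have hβ := (hcont.comp_fract'' hclosed).comp (continuous_const_mul ((t : ℝ) + 1))
  refine (PiLp.continuous_toLp 2 _).comp (continuous_pi fun i => ?_)
  rcases i with i | i
  · exact (PiLp.continuous_apply 2 _ i).comp hβ
  · fin_cases i
    · exact continuous_cos.comp (continuous_const_mul _)
    · exact continuous_sin.comp (continuous_const_mul _)

lemma hasDerivAt_productCurve {n t : ℕ} {α : ℝ → EuclideanSpace ℝ (Fin n)} {s : ℝ}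
    (hs : Int.fract ((t + 1 : ℝ) * s) ≠ 0)
    (hα : DifferentiableAt ℝ α (Int.fract ((t + 1 : ℝ) * s))) :
    HasDerivAt (productCurve n t α) (WithLp.toLp 2 (Sum.elim
      ((t + 1 : ℝ) • deriv α (Int.fract ((t + 1 : ℝ) * s))).ofLp
      ![-(2 * π * sin (2 * π * s)), 2 * π * cos (2 * π * s)])) s :=
  hasDerivAt_toLp_sumElim (hasDerivAt_comp_fract_mul hs hα) (hasDerivAt_toLp_cos_sin _ s)

lemma norm_deriv_productCurve {n t : ℕ} {α : ℝ → EuclideanSpace ℝ (Fin n)} {s : ℝ}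
    (hs : Int.fract ((t + 1 : ℝ) * s) ≠ 0)
    (hα : DifferentiableAt ℝ α (Int.fract ((t + 1 : ℝ) * s))) :
    ‖deriv (productCurve n t α) s‖ =
      √(((t + 1) * ‖deriv α (Int.fract ((t + 1 : ℝ) * s))‖) ^ 2 + (2 * π) ^ 2) := by
  rw [(hasDerivAt_productCurve hs hα).deriv, ← sqrt_sq (norm_nonneg _)]
  congr 1
  rw [EuclideanSpace.norm_sq_toLp_sumElim _
    (WithLp.toLp 2 ![-(2 * π * sin (2 * π * s)), 2 * π * cos (2 * π * s)]),
    norm_toLp_neg_sin_cos, norm_smul, Real.norm_eq_abs,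
    abs_of_pos (by positivity : (0 : ℝ) < t + 1), sq_abs]

lemma integral_eval_productCurve {n t : ℕ} {α : ℝ → EuclideanSpace ℝ (Fin n)}
    (hcont : ContinuousOn α (Set.Icc 0 1)) (hclosed : α 0 = α 1)
    {f : MvPolynomial (Fin n ⊕ Fin 2) ℝ} (hf : f.totalDegree ≤ t) :
    ∫ s in (0 : ℝ)..1, eval (WithLp.equiv 2 (Fin n ⊕ Fin 2 → ℝ) (productCurve n t α s)) f =
      ∫ u in (0 : ℝ)..1, eval (WithLp.equiv 2 (Fin n → ℝ) (α u)) (circleVarsAverage f) := by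
  rw [integral_eq_integral_average_translates (H := fun s => eval (WithLp.equiv 2 _
    (productCurve n t α s)) f) ((continuous_eval f).comp
    ((PiLp.continuous_ofLp 2 _).comp (continuous_productCurve hcont hclosed))) t]
  refine intervalIntegral.integral_congr fun u hu => ?_
  rw [Set.uIcc_of_le zero_le_one] at hu
  rw [smul_eq_mul, eval_circleVarsAverage_eq_equispacedMean hf _ u]
  congr 1
  refine sum_congr rfl fun k _ => ?_
  have hN : ((t : ℝ) + 1) ≠ 0 := by positivity
  simp only [productCurve, Equiv.apply_symm_apply, mul_div_cancel₀ _ hN,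
    Int.fract_add_natCast, apply_fract_eq_of_closed hclosed hu]

end

theorem productCurve_is_design_general (n t : ℕ) (K : Set (EuclideanSpace ℝ (Fin n)))
    (μ : Measure (EuclideanSpace ℝ (Fin n)))
    (α : ℝ → EuclideanSpace ℝ (Fin n))
    (hcont : ContinuousOn α (Set.Icc (0:ℝ) 1))
    (hclosed : α 0 = α 1)
    (L : ℝ) (hL : 0 < L)
    (hspeed : ∀ s ∈ Set.Icc (0:ℝ) 1, ‖deriv α s‖ = L)
    (hdesign : ∀ f : MvPolynomial (Fin n) ℝ, f.totalDegree ≤ t →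
      (∫ s in (0:ℝ)..1, ‖deriv α s‖)⁻¹ *
          ∫ s in (0:ℝ)..1, eval (WithLp.equiv 2 (Fin n → ℝ) (α s)) f * ‖deriv α s‖ =
        ((μ K).toReal)⁻¹ * ∫ x in K, eval (WithLp.equiv 2 (Fin n → ℝ) x) f ∂μ) :
    ∀ f : MvPolynomial (Fin n ⊕ Fin 2) ℝ, f.totalDegree ≤ t →
      (∫ s in (0:ℝ)..1, ‖deriv (productCurve n t α) s‖)⁻¹ *
          ∫ s in (0:ℝ)..1,
            eval (WithLp.equiv 2 (Fin n ⊕ Fin 2 → ℝ) (productCurve n t α s)) f *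
            ‖deriv (productCurve n t α) s‖ =
        ((μ K).toReal * (2 * π))⁻¹ *
          ∫ x in K, (∫ θ in (0:ℝ)..(2 * π),
            eval (Sum.elim (WithLp.equiv 2 (Fin n → ℝ) x)
              ![Real.cos θ, Real.sin θ]) f) ∂μ := by
  intro f hf
  have hdiff : ∀ u ∈ Set.Icc (0 : ℝ) 1, DifferentiableAt ℝ α u := fun u hu =>
    differentiableAt_of_deriv_ne_zero (norm_ne_zero_iff.1 (hspeed u hu ▸ hL.ne'))
  have hunit : ∀ u, Int.fract u ∈ Set.Icc (0 : ℝ) 1 := fun u =>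
    ⟨Int.fract_nonneg u, (Int.fract_lt_one u).le⟩
  have hγspeed : ∀ᵐ s, s ∈ Ι (0 : ℝ) 1 →
      ‖deriv (productCurve n t α) s‖ = √(((t + 1) * L) ^ 2 + (2 * π) ^ 2) :=
    (ae_fract_mul_ne_zero (T := t + 1) (by positivity)).mono fun s hs _ => by
      rw [norm_deriv_productCurve hs (hdiff _ (hunit _)), hspeed _ (hunit _)]
  have hαspeed : ∀ᵐ s, s ∈ Ι (0 : ℝ) 1 → ‖deriv α s‖ = L :=
    ae_of_all _ fun s hs =>
      hspeed s (Set.Ioc_subset_Icc_self (by rwa [Set.uIoc_of_le zero_le_one] at hs))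
  have hαdesign := hdesign (circleVarsAverage f) (totalDegree_circleVarsAverage_le hf)
  rw [lineAverage_eq_integral hL.ne' hαspeed] at hαdesign
  rw [lineAverage_eq_integral (by positivity) hγspeed,
    integral_eval_productCurve hcont hclosed hf, hαdesign]
  simp_rw [eval_circleVarsAverage_eq_circleMean, integral_const_mul]
  field_simp

/-- if `α` is a constant-speed `t`-design curve on a compact measure space
`(K ⊂ ℝ^n, μ)`, then `γ(s) = (α((t+1)s - ⌊(t+1)s⌋), cos 2πs, sin 2πs)` is a `t`-design
curve on `(K × S¹, μ × σ)`, `σ` the arc-length measure on `S¹`. -/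
theorem productCurve_is_design (n t : ℕ) (K : Set (EuclideanSpace ℝ (Fin n)))
    (μ : Measure (EuclideanSpace ℝ (Fin n))) (hK : IsCompact K)
    (α : ℝ → EuclideanSpace ℝ (Fin n))
    (hmem : ∀ s ∈ Set.Icc (0:ℝ) 1, α s ∈ K)
    (hcont : ContinuousOn α (Set.Icc (0:ℝ) 1))
    (hclosed : α 0 = α 1)
    (L : ℝ) (hL : 0 < L)
    (hspeed : ∀ s ∈ Set.Icc (0:ℝ) 1, ‖deriv α s‖ = L)
    (hdesign : ∀ f : MvPolynomial (Fin n) ℝ, f.totalDegree ≤ t →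
      (∫ s in (0:ℝ)..1, ‖deriv α s‖)⁻¹ *
          ∫ s in (0:ℝ)..1, eval (WithLp.equiv 2 (Fin n → ℝ) (α s)) f * ‖deriv α s‖ =
        ((μ K).toReal)⁻¹ * ∫ x in K, eval (WithLp.equiv 2 (Fin n → ℝ) x) f ∂μ) :
    ∀ f : MvPolynomial (Fin n ⊕ Fin 2) ℝ, f.totalDegree ≤ t →
      (∫ s in (0:ℝ)..1, ‖deriv (productCurve n t α) s‖)⁻¹ *
          ∫ s in (0:ℝ)..1,
            eval (WithLp.equiv 2 (Fin n ⊕ Fin 2 → ℝ) (productCurve n t α s)) f *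
            ‖deriv (productCurve n t α) s‖ =
        ((μ K).toReal * (2 * π))⁻¹ *
          ∫ x in K, (∫ θ in (0:ℝ)..(2 * π),
            eval (Sum.elim (WithLp.equiv 2 (Fin n → ℝ) x)
              ![Real.cos θ, Real.sin θ]) f) ∂μ :=
  productCurve_is_design_general n t K μ α hcont hclosed L hL hspeed hdesign
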